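/- Faithful form of Proposition 2: Let T be a natural number and let the state, input, and output index types each be of the form (Fin (T+1)) × (γ₁ ⊕ γ₂) (time index paired with an agent-partitioned index): rows/columns of Φxx use (Fin (T+1)) × (x₁ ⊕ x₂), Φxy has columns in (Fin (T+1)) × (y₁ ⊕ y₂), Φux has rows in (Fin (T+1)) × (u₁ ⊕ u₂), and Φuy maps from (Fin (T+1)) × (y₁ ⊕ y₂) to (Fin (T+1)) × (u₁ ⊕ u₂), with all index types finite. Suppose Φxx = 1 + N where N ((t,i),(τ,j)) = 0 whenever τ ≥ t (N is strictly block lower triangular in time, so Φxx is invertible), and suppose every entry of Φxx with row in agent 1 and column in agent 2 vanishes: Φxx ((t, Sum.inl a), (τ, Sum.inr b)) = 0 for all t, τ, a, b. Define K := Φuy − Φux * Φxx⁻¹ * Φxy. For a matrix M with agent-partitioned rows and columns, let M^{ij} denote the submatrix of M with rows in agent i and columns in agent j (keeping all time indices). Then rank (K^{21}) ≤ rank (Φxx^{21}) + rank (Φxy^{21}) + rank (Φux^{21}) + rank (Φuy^{21}), and rank (K^{12}) ≤ rank (Φxx^{12}) + rank (Φxy^{12}) + rank (Φux^{12}) + rank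 (Φuy^{12}). -/
import Mathlib

open Matrix

/-- The agent-(2,1) submatrix of a matrix whose rows and columns are time indices paired
with agent-partitioned indices: keep rows of agent 2 and columns of agent 1, across all
time indices. -/
def agentBlock₂₁ {T : ℕ} {α₁ α₂ β₁ β₂ : Type*}
    (M : Matrix (Fin (T + 1) × (α₁ ⊕ α₂)) (Fin (T + 1) × (β₁ ⊕ β₂)) ℝ) :
    Matrix (Fin (T + 1) × α₂) (Fin (T + 1) × β₁) ℝ :=
  M.submatrix (fun p => (p.1, Sum.inr p.2)) (fun q => (q.1, Sum.inl q.2))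

/-- The agent-(1,2) submatrix: keep rows of agent 1 and columns of agent 2, across all
time indices. -/
def agentBlock₁₂ {T : ℕ} {α₁ α₂ β₁ β₂ : Type*}
    (M : Matrix (Fin (T + 1) × (α₁ ⊕ α₂)) (Fin (T + 1) × (β₁ ⊕ β₂)) ℝ) :
    Matrix (Fin (T + 1) × α₁) (Fin (T + 1) × β₂) ℝ :=
  M.submatrix (fun p => (p.1, Sum.inl p.2)) (fun q => (q.1, Sum.inr q.2))

/-- Agent-(1,1) block. -/
def blkA' {T : ℕ} {α₁ α₂ β₁ β₂ : Type*}
    (M : Matrix (Fin (T + 1) × (α₁ ⊕ α₂)) (Fin (T + 1) × (β₁ ⊕ β₂)) ℝ) :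
    Matrix (Fin (T + 1) × α₁) (Fin (T + 1) × β₁) ℝ :=
  M.submatrix (fun p => (p.1, Sum.inl p.2)) (fun q => (q.1, Sum.inl q.2))

/-- Agent-(2,2) block. -/
def blkD' {T : ℕ} {α₁ α₂ β₁ β₂ : Type*}
    (M : Matrix (Fin (T + 1) × (α₁ ⊕ α₂)) (Fin (T + 1) × (β₁ ⊕ β₂)) ℝ) :
    Matrix (Fin (T + 1) × α₂) (Fin (T + 1) × β₂) ℝ :=
  M.submatrix (fun p => (p.1, Sum.inr p.2)) (fun q => (q.1, Sum.inr q.2))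

lemma blk21_mul' {T : ℕ} {α₁ α₂ β₁ β₂ γ₁ γ₂ : Type*} [Fintype β₁] [Fintype β₂]
    (P : Matrix (Fin (T + 1) × (α₁ ⊕ α₂)) (Fin (T + 1) × (β₁ ⊕ β₂)) ℝ)
    (Q : Matrix (Fin (T + 1) × (β₁ ⊕ β₂)) (Fin (T + 1) × (γ₁ ⊕ γ₂)) ℝ) :
    agentBlock₂₁ (P * Q) = agentBlock₂₁ P * blkA' Q + blkD' P * agentBlock₂₁ Q := by
  ext i j
  simp only [agentBlock₂₁, blkA', blkD', Matrix.add_apply, Matrix.submatrix_apply,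
    Matrix.mul_apply, Fintype.sum_prod_type, Fintype.sum_sum_type]
  rw [← Finset.sum_add_distrib]

lemma blk12_mul' {T : ℕ} {α₁ α₂ β₁ β₂ γ₁ γ₂ : Type*} [Fintype β₁] [Fintype β₂]
    (P : Matrix (Fin (T + 1) × (α₁ ⊕ α₂)) (Fin (T + 1) × (β₁ ⊕ β₂)) ℝ)
    (Q : Matrix (Fin (T + 1) × (β₁ ⊕ β₂)) (Fin (T + 1) × (γ₁ ⊕ γ₂)) ℝ) :
    agentBlock₁₂ (P * Q) = blkA' P * agentBlock₁₂ Q + agentBlock₁₂ P * blkD' Q := by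
  ext i j
  simp only [agentBlock₁₂, blkA', blkD', Matrix.add_apply, Matrix.submatrix_apply,
    Matrix.mul_apply, Fintype.sum_prod_type, Fintype.sum_sum_type]
  rw [← Finset.sum_add_distrib]

lemma det_eq_one_aux' {T : ℕ} {γ : Type*} [Fintype γ] [DecidableEq γ]
    (M : Matrix (Fin (T + 1) × γ) (Fin (T + 1) × γ) ℝ)
    (hlow : ∀ i j : Fin (T + 1) × γ, i.1 < j.1 → M i j = 0)
    (hdiag : ∀ i j : Fin (T + 1) × γ, i.1 = j.1 → M i j = if i = j then 1 else 0) :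
    M.det = 1 := by
  have hbt : M.BlockTriangular (fun p => OrderDual.toDual p.1) := by
    intro i j h
    exact hlow i j (by exact_mod_cast h)
  rw [hbt.det]
  refine Finset.prod_eq_one fun a _ => ?_
  have : M.toSquareBlock (fun p => OrderDual.toDual p.1) a = 1 := by
    ext ⟨i, hi⟩ ⟨j, hj⟩
    have hij : i.1 = j.1 := by
      have : OrderDual.toDual i.1 = OrderDual.toDual j.1 := hi.trans hj.symm
      exact_mod_cast this
    simp only [Matrix.toSquareBlock_def, Matrix.of_apply, Matrix.one_apply, Subtype.mk.injEq]
    exact hdiag i j hij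
  rw [this, Matrix.det_one]

lemma rank_add_le' {m n : Type*} [Fintype m] [Fintype n] (A B : Matrix m n ℝ) :
    (A + B).rank ≤ A.rank + B.rank := by
  rw [Matrix.rank, Matrix.rank, Matrix.rank, Matrix.mulVecLin_add]
  have hle : LinearMap.range (A.mulVecLin + B.mulVecLin) ≤
      LinearMap.range A.mulVecLin ⊔ LinearMap.range B.mulVecLin := by
    rintro x ⟨y, rfl⟩
    exact Submodule.add_mem_sup (LinearMap.mem_range_self _ y) (LinearMap.mem_range_self _ y)
  exact (Submodule.finrank_mono hle).trans
    (Submodule.finrank_add_le_finrank_add_finrank _ _)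

lemma rank_neg' {m n : Type*} [Fintype n] (A : Matrix m n ℝ) : (-A).rank = A.rank := by
  have h : (-A).mulVecLin = -A.mulVecLin := by
    ext v i
    simp [Matrix.mulVecLin_apply, Matrix.neg_mulVec]
  rw [Matrix.rank, Matrix.rank, h, LinearMap.range_neg]

/-- Faithful form of Proposition 2: rank bounds on the off-diagonal agent blocks of the
SLS controller `K = Φuy − Φux Φxx⁻¹ Φxy`, when `Φxx = 1 + N` with `N` strictly block
lower triangular in time and the agent-(1,2) block of `Φxx` vanishes. -/
theorem proposition2
    {T : ℕ} {x₁ x₂ u₁ u₂ y₁ y₂ : Type*}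
    [Fintype x₁] [Fintype x₂] [Fintype u₁] [Fintype u₂] [Fintype y₁] [Fintype y₂]
    [DecidableEq x₁] [DecidableEq x₂]
    (Φxx N : Matrix (Fin (T + 1) × (x₁ ⊕ x₂)) (Fin (T + 1) × (x₁ ⊕ x₂)) ℝ)
    (Φxy : Matrix (Fin (T + 1) × (x₁ ⊕ x₂)) (Fin (T + 1) × (y₁ ⊕ y₂)) ℝ)
    (Φux : Matrix (Fin (T + 1) × (u₁ ⊕ u₂)) (Fin (T + 1) × (x₁ ⊕ x₂)) ℝ)
    (Φuy : Matrix (Fin (T + 1) × (u₁ ⊕ u₂)) (Fin (T + 1) × (y₁ ⊕ y₂)) ℝ)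
    (hΦxx : Φxx = 1 + N)
    (hN : ∀ (t τ : Fin (T + 1)) (i j : x₁ ⊕ x₂), τ ≥ t → N (t, i) (τ, j) = 0)
    (h12 : ∀ (t τ : Fin (T + 1)) (a : x₁) (b : x₂),
      Φxx (t, Sum.inl a) (τ, Sum.inr b) = 0)
    (K : Matrix (Fin (T + 1) × (u₁ ⊕ u₂)) (Fin (T + 1) × (y₁ ⊕ y₂)) ℝ)
    (hK : K = Φuy - Φux * Φxx⁻¹ * Φxy) :
    (agentBlock₂₁ K).rank ≤
        (agentBlock₂₁ Φxx).rank + (agentBlock₂₁ Φxy).rank +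
        (agentBlock₂₁ Φux).rank + (agentBlock₂₁ Φuy).rank ∧
    (agentBlock₁₂ K).rank ≤
        (agentBlock₁₂ Φxx).rank + (agentBlock₁₂ Φxy).rank +
        (agentBlock₁₂ Φux).rank + (agentBlock₁₂ Φuy).rank := by
  classical
  -- determinant facts
  have hNzero : ∀ i j : Fin (T + 1) × (x₁ ⊕ x₂), j.1 ≥ i.1 → N i j = 0 := by
    intro i j h
    exact hN i.1 j.1 i.2 j.2 h
  have hdet : Φxx.det = 1 := by
    apply det_eq_one_aux'
    · intro i j hij
      have h1 : (1 : Matrix (Fin (T + 1) × (x₁ ⊕ x₂)) _ ℝ) i j = 0 :=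
        Matrix.one_apply_ne (by rintro rfl; exact lt_irrefl _ hij)
      rw [hΦxx, Matrix.add_apply, h1, hNzero i j hij.le, add_zero]
    · intro i j hij
      rw [hΦxx, Matrix.add_apply, hNzero i j hij.le, add_zero, Matrix.one_apply]
  have hu : IsUnit Φxx.det := by rw [hdet]; exact isUnit_one
  have hdetA : (blkA' Φxx).det = 1 := by
    apply det_eq_one_aux'
    · intro i j hij
      have h1 : (1 : Matrix (Fin (T + 1) × (x₁ ⊕ x₂)) _ ℝ)
          (i.1, Sum.inl i.2) (j.1, Sum.inl j.2) = 0 :=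
        Matrix.one_apply_ne (by intro h; exact absurd (congrArg Prod.fst h) hij.ne)
      simp only [blkA', Matrix.submatrix_apply]
      rw [hΦxx, Matrix.add_apply, h1, hNzero _ _ hij.le, add_zero]
    · intro i j hij
      simp only [blkA', Matrix.submatrix_apply]
      rw [hΦxx, Matrix.add_apply, hNzero _ _ hij.le, add_zero, Matrix.one_apply]
      simp [Prod.ext_iff, hij]
  have huA : IsUnit (blkA' Φxx).det := by rw [hdetA]; exact isUnit_one
  have hdetD : (blkD' Φxx).det = 1 := by
    apply det_eq_one_aux'
    · intro i j hij
      have h1 : (1 : Matrix (Fin (T + 1) × (x₁ ⊕ x₂)) _ ℝ)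
          (i.1, Sum.inr i.2) (j.1, Sum.inr j.2) = 0 :=
        Matrix.one_apply_ne (by intro h; exact absurd (congrArg Prod.fst h) hij.ne)
      simp only [blkD', Matrix.submatrix_apply]
      rw [hΦxx, Matrix.add_apply, h1, hNzero _ _ hij.le, add_zero]
    · intro i j hij
      simp only [blkD', Matrix.submatrix_apply]
      rw [hΦxx, Matrix.add_apply, hNzero _ _ hij.le, add_zero, Matrix.one_apply]
      simp [Prod.ext_iff, hij]
  have huD : IsUnit (blkD' Φxx).det := by rw [hdetD]; exact isUnit_one
  have hinv2 : Φxx⁻¹ * Φxx = 1 := Matrix.nonsing_inv_mul _ hu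
  -- blocks of identity
  have hone21 : agentBlock₂₁ (1 : Matrix (Fin (T + 1) × (x₁ ⊕ x₂)) (Fin (T + 1) × (x₁ ⊕ x₂)) ℝ) = 0 := by
    ext i j
    simp only [agentBlock₂₁, Matrix.submatrix_apply, Matrix.zero_apply]
    exact Matrix.one_apply_ne (by simp [Prod.ext_iff])
  have hone12 : agentBlock₁₂ (1 : Matrix (Fin (T + 1) × (x₁ ⊕ x₂)) (Fin (T + 1) × (x₁ ⊕ x₂)) ℝ) = 0 := by
    ext i j
    simp only [agentBlock₁₂, Matrix.submatrix_apply, Matrix.zero_apply]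
    exact Matrix.one_apply_ne (by simp [Prod.ext_iff])
  -- the (2,1) block of the inverse
  have h21 : agentBlock₂₁ Φxx⁻¹ * blkA' Φxx + blkD' Φxx⁻¹ * agentBlock₂₁ Φxx = 0 := by
    have := blk21_mul' Φxx⁻¹ Φxx
    rw [hinv2, hone21] at this
    exact this.symm
  have hΨ21 : agentBlock₂₁ Φxx⁻¹ = blkD' Φxx⁻¹ * (-agentBlock₂₁ Φxx) * (blkA' Φxx)⁻¹ := by
    have h : agentBlock₂₁ Φxx⁻¹ * blkA' Φxx = blkD' Φxx⁻¹ * (-agentBlock₂₁ Φxx) := by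
      rw [Matrix.mul_neg]
      exact eq_neg_of_add_eq_zero_left h21
    calc agentBlock₂₁ Φxx⁻¹
        = agentBlock₂₁ Φxx⁻¹ * (blkA' Φxx * (blkA' Φxx)⁻¹) := by
          rw [Matrix.mul_nonsing_inv _ huA, Matrix.mul_one]
      _ = agentBlock₂₁ Φxx⁻¹ * blkA' Φxx * (blkA' Φxx)⁻¹ := by rw [Matrix.mul_assoc]
      _ = blkD' Φxx⁻¹ * (-agentBlock₂₁ Φxx) * (blkA' Φxx)⁻¹ := by rw [h]
  have hrankΨ21 : (agentBlock₂₁ Φxx⁻¹).rank ≤ (agentBlock₂₁ Φxx).rank := by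
    rw [hΨ21]
    exact (Matrix.rank_mul_le_left _ _).trans
      ((Matrix.rank_mul_le_right _ _).trans (rank_neg' _).le)
  -- the (1,2) block of the inverse vanishes
  have hxx12 : agentBlock₁₂ Φxx = 0 := by
    ext i j
    exact h12 i.1 j.1 i.2 j.2
  have hΨ12 : agentBlock₁₂ Φxx⁻¹ = 0 := by
    have h : agentBlock₁₂ Φxx⁻¹ * blkD' Φxx = 0 := by
      have := blk12_mul' Φxx⁻¹ Φxx
      rw [hinv2, hone12, hxx12, Matrix.mul_zero, zero_add] at this
      exact this.symm
    calc agentBlock₁₂ Φxx⁻¹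
        = agentBlock₁₂ Φxx⁻¹ * (blkD' Φxx * (blkD' Φxx)⁻¹) := by
          rw [Matrix.mul_nonsing_inv _ huD, Matrix.mul_one]
      _ = agentBlock₁₂ Φxx⁻¹ * blkD' Φxx * (blkD' Φxx)⁻¹ := by rw [Matrix.mul_assoc]
      _ = 0 := by rw [h, Matrix.zero_mul]
  -- decompositions of the blocks of K
  have hKassoc : K = Φuy - Φux * (Φxx⁻¹ * Φxy) := by rw [hK, Matrix.mul_assoc]
  have hsub21 : agentBlock₂₁ (Φuy - Φux * (Φxx⁻¹ * Φxy)) =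
      agentBlock₂₁ Φuy - agentBlock₂₁ (Φux * (Φxx⁻¹ * Φxy)) := by
    ext i j
    simp [agentBlock₂₁, Matrix.sub_apply]
  have hsub12 : agentBlock₁₂ (Φuy - Φux * (Φxx⁻¹ * Φxy)) =
      agentBlock₁₂ Φuy - agentBlock₁₂ (Φux * (Φxx⁻¹ * Φxy)) := by
    ext i j
    simp [agentBlock₁₂, Matrix.sub_apply]
  have hdecomp21 : agentBlock₂₁ K = agentBlock₂₁ Φuy +
      (-(agentBlock₂₁ Φux * blkA' (Φxx⁻¹ * Φxy)) +
       (-(blkD' Φux * (agentBlock₂₁ Φxx⁻¹ * blkA' Φxy)) +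
        -(blkD' Φux * (blkD' Φxx⁻¹ * agentBlock₂₁ Φxy)))) := by
    rw [hKassoc, hsub21, blk21_mul' Φux (Φxx⁻¹ * Φxy), blk21_mul' Φxx⁻¹ Φxy,
      Matrix.mul_add]
    abel
  have hdecomp12 : agentBlock₁₂ K = agentBlock₁₂ Φuy +
      (-(blkA' Φux * (blkA' Φxx⁻¹ * agentBlock₁₂ Φxy)) +
       -(agentBlock₁₂ Φux * blkD' (Φxx⁻¹ * Φxy))) := by
    rw [hKassoc, hsub12, blk12_mul' Φux (Φxx⁻¹ * Φxy), blk12_mul' Φxx⁻¹ Φxy,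
      hΨ12, Matrix.zero_mul, add_zero]
    abel
  constructor
  · have b2 : (-(agentBlock₂₁ Φux * blkA' (Φxx⁻¹ * Φxy))).rank ≤ (agentBlock₂₁ Φux).rank := by
      rw [rank_neg']; exact Matrix.rank_mul_le_left _ _
    have b3 : (-(blkD' Φux * (agentBlock₂₁ Φxx⁻¹ * blkA' Φxy))).rank ≤
        (agentBlock₂₁ Φxx).rank := by
      rw [rank_neg']
      exact (Matrix.rank_mul_le_right _ _).trans
        ((Matrix.rank_mul_le_left _ _).trans hrankΨ21)
    have b4 : (-(blkD' Φux * (blkD' Φxx⁻¹ * agentBlock₂₁ Φxy))).rank ≤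
        (agentBlock₂₁ Φxy).rank := by
      rw [rank_neg']
      exact (Matrix.rank_mul_le_right _ _).trans (Matrix.rank_mul_le_right _ _)
    have s1 := rank_add_le' (agentBlock₂₁ Φuy)
      (-(agentBlock₂₁ Φux * blkA' (Φxx⁻¹ * Φxy)) +
       (-(blkD' Φux * (agentBlock₂₁ Φxx⁻¹ * blkA' Φxy)) +
        -(blkD' Φux * (blkD' Φxx⁻¹ * agentBlock₂₁ Φxy))))
    have s2 := rank_add_le' (-(agentBlock₂₁ Φux * blkA' (Φxx⁻¹ * Φxy)))
      (-(blkD' Φux * (agentBlock₂₁ Φxx⁻¹ * blkA' Φxy)) +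
       -(blkD' Φux * (blkD' Φxx⁻¹ * agentBlock₂₁ Φxy)))
    have s3 := rank_add_le' (-(blkD' Φux * (agentBlock₂₁ Φxx⁻¹ * blkA' Φxy)))
      (-(blkD' Φux * (blkD' Φxx⁻¹ * agentBlock₂₁ Φxy)))
    rw [← hdecomp21] at s1
    omega
  · have b2 : (-(blkA' Φux * (blkA' Φxx⁻¹ * agentBlock₁₂ Φxy))).rank ≤
        (agentBlock₁₂ Φxy).rank := by
      rw [rank_neg']
      exact (Matrix.rank_mul_le_right _ _).trans (Matrix.rank_mul_le_right _ _)
    have b3 : (-(agentBlock₁₂ Φux * blkD' (Φxx⁻¹ * Φxy))).rank ≤ (agentBlock₁₂ Φux).rank := by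
      rw [rank_neg']; exact Matrix.rank_mul_le_left _ _
    have s1 := rank_add_le' (agentBlock₁₂ Φuy)
      (-(blkA' Φux * (blkA' Φxx⁻¹ * agentBlock₁₂ Φxy)) +
       -(agentBlock₁₂ Φux * blkD' (Φxx⁻¹ * Φxy)))
    have s2 := rank_add_le' (-(blkA' Φux * (blkA' Φxx⁻¹ * agentBlock₁₂ Φxy)))
      (-(agentBlock₁₂ Φux * blkD' (Φxx⁻¹ * Φxy)))
    rw [← hdecomp12] at s1
    omega
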